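/- arXiv:2601.06957 — 3 statements merged into one kernel-verified Lean document; each statement's English description precedes it below -/
import Mathlib

section
/- For every ξ = (ξ₁, ξ₂) ∈ ℝ² with ξ ≠ 0 and each sign ε ∈ {+1, −1}, the eigenspace of 𝒜(ξ) for the eigenvalue ε|ξ| equals the set of x = (M₁, M₂, U₁₁, U₁₂, U₂₁, U₂₂, H, N₁, N₂) ∈ ℝ⁹ such that N₁ = N₂ = 0, |ξ| U_{AB} = ε (ξ_A M_B − ξ_B M_A) for A, B ∈ {1,2}, and |ξ| H = ε Σ_{A=1,2} ξ_A M_A; this eigenspace is 2-dimensional (parametrized freely by (M₁, M₂)). -/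
/-!
For `μ ≠ 0`, the `U`-, `H`- and `N`-rows of `𝒜(ξ) x = μ x` express `U` and `H` through `M` and
force `N = 0`; substituting them into the two `M`-rows turns these into `(μ² - |ξ|²) M = 0`, which
holds identically when `μ = ±|ξ|`. So the eigenspace is the graph of a linear map on the
`M`-plane, spanned by the eigenvectors with `M = μ e₁` and `M = μ e₂`.
-/

/-- The principal symbol `𝒜(ξ)` of the constraint-propagation system, acting on
`ℝ⁹` with coordinates `(M₁, M₂, U₁₁, U₁₂, U₂₁, U₂₂, H, N₁, N₂)`
(indexed `0, 1, 2, 3, 4, 5, 6, 7, 8`). -/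
def constraintSymbol (ξ₁ ξ₂ : ℝ) : Matrix (Fin 9) (Fin 9) ℝ :=
  !![0, 0, -ξ₁, -ξ₂, 0, 0, ξ₁, 0, 0;
     0, 0, 0, 0, -ξ₁, -ξ₂, ξ₂, 0, 0;
     0, 0, 0, 0, 0, 0, 0, 0, 0;
     -ξ₂, ξ₁, 0, 0, 0, 0, 0, 0, 0;
     ξ₂, -ξ₁, 0, 0, 0, 0, 0, 0, 0;
     0, 0, 0, 0, 0, 0, 0, 0, 0;
     ξ₁, ξ₂, 0, 0, 0, 0, 0, 0, 0;
     0, 0, 0, 0, 0, 0, 0, 0, 0;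
     0, 0, 0, 0, 0, 0, 0, 0, 0]

namespace constraintSymbol

open Matrix

variable {ξ₁ ξ₂ μ : ℝ}

theorem mulVec_eq (ξ₁ ξ₂ : ℝ) (x : Fin 9 → ℝ) :
    constraintSymbol ξ₁ ξ₂ *ᵥ x =
      ![-ξ₁ * x 2 - ξ₂ * x 3 + ξ₁ * x 6, -ξ₁ * x 4 - ξ₂ * x 5 + ξ₂ * x 6, 0,
        -ξ₂ * x 0 + ξ₁ * x 1, ξ₂ * x 0 - ξ₁ * x 1, 0, ξ₁ * x 0 + ξ₂ * x 1, 0, 0] := by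
  funext i
  fin_cases i <;>
    simp only [constraintSymbol, mulVec, dotProduct, Fin.sum_univ_succ, Fin.isValue, Fin.zero_eta,
      Fin.mk_one, Fin.reduceFinMk, Fin.succ_zero_eq_one, Fin.succ_one_eq_two, Fin.reduceSucc,
      of_apply, cons_val', cons_val, cons_val_zero, cons_val_one, cons_val_succ, cons_val_fin_one,
      Finset.univ_unique, Fin.default_eq_zero, Finset.sum_const_zero,
      zero_mul, neg_mul] <;> ring

theorem mem_eigenspace_iff (hμ : μ ≠ 0) (hμξ : μ ^ 2 = ξ₁ ^ 2 + ξ₂ ^ 2) (x : Fin 9 → ℝ) :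
    x ∈ Module.End.eigenspace (constraintSymbol ξ₁ ξ₂).mulVecLin μ ↔
      x 7 = 0 ∧ x 8 = 0 ∧ x 2 = 0 ∧ μ * x 3 = ξ₁ * x 1 - ξ₂ * x 0 ∧
        μ * x 4 = ξ₂ * x 0 - ξ₁ * x 1 ∧ x 5 = 0 ∧ μ * x 6 = ξ₁ * x 0 + ξ₂ * x 1 := by
  rw [Module.End.mem_eigenspace_iff, Matrix.mulVecLin_apply, mulVec_eq]
  simp only [funext_iff, Fin.forall_fin_succ, IsEmpty.forall_iff, Pi.smul_apply, smul_eq_mul,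
    cons_val_zero, cons_val_succ, Fin.succ_zero_eq_one, Fin.succ_one_eq_two, Fin.reduceSucc,
    zero_eq_mul, hμ, false_or, and_true]
  constructor
  · rintro ⟨-, -, h2, h3, h4, h5, h6, h7, h8⟩
    exact ⟨h7, h8, h2, by linarith, by linarith, h5, by linarith⟩
  · rintro ⟨h7, h8, h2, h3, h4, h5, h6⟩
    refine ⟨mul_left_cancel₀ hμ ?_, mul_left_cancel₀ hμ ?_, h2, by linarith, by linarith, h5,
      by linarith, h7, h8⟩
    · linear_combination -ξ₂ * h3 + ξ₁ * h6 - x 0 * hμξ + (-ξ₁ * μ) * h2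
    · linear_combination -ξ₁ * h4 + ξ₂ * h6 - x 1 * hμξ + (-ξ₂ * μ) * h5

def eigenvector (ξ₁ ξ₂ μ : ℝ) : Fin 2 → Fin 9 → ℝ :=
  ![![μ, 0, 0, -ξ₂, ξ₂, 0, ξ₁, 0, 0], ![0, μ, 0, ξ₁, -ξ₁, 0, ξ₂, 0, 0]]

theorem linearIndependent_eigenvector (hμ : μ ≠ 0) :
    LinearIndependent ℝ (eigenvector ξ₁ ξ₂ μ) := by
  rw [linearIndependent_fin2]
  refine ⟨fun h => hμ (congrFun h 1), fun a h => hμ ?_⟩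
  simpa [eigenvector] using (congrFun h 0).symm

theorem eigenspace_eq_span (hμ : μ ≠ 0) (hμξ : μ ^ 2 = ξ₁ ^ 2 + ξ₂ ^ 2) :
    Module.End.eigenspace (constraintSymbol ξ₁ ξ₂).mulVecLin μ =
      Submodule.span ℝ (Set.range (eigenvector ξ₁ ξ₂ μ)) := by
  ext x
  rw [mem_eigenspace_iff hμ hμξ, Submodule.mem_span_range_iff_exists_fun]
  constructor
  · rintro ⟨h7, h8, h2, h3, h4, h5, h6⟩
    refine ⟨![x 0 / μ, x 1 / μ], funext fun i => ?_⟩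
    fin_cases i <;>
      simp only [eigenvector, Fin.isValue, Fin.zero_eta, Fin.mk_one, Fin.reduceFinMk,
        Finset.sum_apply, Pi.smul_apply, cons_val', cons_val, cons_val_zero, cons_val_one,
        cons_val_fin_one, smul_eq_mul, Fin.sum_univ_two, mul_zero, add_zero, zero_add, mul_neg,
        div_mul_cancel₀ _ hμ, h2, h5, h7, h8] <;>
      field_simp <;> linarith
  · rintro ⟨c, rfl⟩
    simp only [eigenvector, Finset.sum_apply, Pi.smul_apply, cons_val', cons_val,
      cons_val_fin_one, smul_eq_mul, Fin.sum_univ_two, cons_val_zero, cons_val_one, mul_zero,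
      add_zero, zero_add, mul_neg, true_and]
    exact ⟨by ring, by ring, by ring⟩

theorem finrank_eigenspace (hμ : μ ≠ 0) (hμξ : μ ^ 2 = ξ₁ ^ 2 + ξ₂ ^ 2) :
    Module.finrank ℝ (Module.End.eigenspace (constraintSymbol ξ₁ ξ₂).mulVecLin μ) = 2 := by
  rw [eigenspace_eq_span hμ hμξ, finrank_span_eq_card (linearIndependent_eigenvector hμ),
    Fintype.card_fin]

end constraintSymbol

/-- For `ξ ≠ 0` and sign `ε = ±1`, the eigenspace of `𝒜(ξ)` for
the eigenvalue `ε|ξ|` is `{x : N₁ = N₂ = 0, |ξ| U_{AB} = ε(ξ_A M_B − ξ_B M_A),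
|ξ| H = ε Σ_A ξ_A M_A}`, which is 2-dimensional. -/
theorem constraintSymbol_nonzero_eigenspaces (ξ₁ ξ₂ : ℝ) (hξ : (ξ₁, ξ₂) ≠ (0, 0))
    (ε : ℝ) (hε : ε = 1 ∨ ε = -1)
    (ν : ℝ) (hν : ν = Real.sqrt (ξ₁ ^ 2 + ξ₂ ^ 2)) :
    (∀ x : Fin 9 → ℝ,
      x ∈ Module.End.eigenspace (constraintSymbol ξ₁ ξ₂).mulVecLin (ε * ν) ↔
        (x 7 = 0 ∧ x 8 = 0 ∧
          ν * x 2 = ε * (ξ₁ * x 0 - ξ₁ * x 0) ∧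
          ν * x 3 = ε * (ξ₁ * x 1 - ξ₂ * x 0) ∧
          ν * x 4 = ε * (ξ₂ * x 0 - ξ₁ * x 1) ∧
          ν * x 5 = ε * (ξ₂ * x 1 - ξ₂ * x 1) ∧
          ν * x 6 = ε * (ξ₁ * x 0 + ξ₂ * x 1))) ∧
    Module.finrank ℝ
      (Module.End.eigenspace (constraintSymbol ξ₁ ξ₂).mulVecLin (ε * ν)) = 2 := by
  have hpos : 0 < ξ₁ ^ 2 + ξ₂ ^ 2 := by
    contrapose! hξ
    have h₁ : ξ₁ = 0 := by nlinarith [sq_nonneg ξ₁, sq_nonneg ξ₂]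
    have h₂ : ξ₂ = 0 := by nlinarith [sq_nonneg ξ₁, sq_nonneg ξ₂]
    rw [h₁, h₂]
  have hν0 : ν ≠ 0 := hν ▸ (Real.sqrt_pos.mpr hpos).ne'
  have hε2 : ε * ε = 1 := by rcases hε with rfl | rfl <;> norm_num
  have hεν : ε * ν ≠ 0 := mul_ne_zero (left_ne_zero_of_mul_eq_one hε2) hν0
  have hεν2 : (ε * ν) ^ 2 = ξ₁ ^ 2 + ξ₂ ^ 2 := by
    rw [mul_pow, hν, Real.sq_sqrt hpos.le, sq, hε2, one_mul]
  have hsign : ∀ a b : ℝ, ν * a = ε * b ↔ ε * ν * a = b := fun a b => by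
    constructor
    · intro h
      linear_combination ε * h + b * hε2
    · intro h
      linear_combination ε * h - ν * a * hε2
  refine ⟨fun x => ?_, constraintSymbol.finrank_eigenspace hεν hεν2⟩
  rw [constraintSymbol.mem_eigenspace_iff hεν hεν2]
  simp only [hsign, sub_self, mul_zero, mul_eq_zero, hν0, false_or]
end

section
/- Let t₀ < 0, 0 < p ≤ 1 and C₀ ≥ 0. Let y : [t₀, 0) → ℝ be differentiable and z : [t₀, 0) → [0, ∞) be continuous, and suppose y′(t) ≤ C₀ (−t)^{p−1} y(t) − (−t)^{−1} z(t) for all t ∈ [t₀, 0). Then for all t ∈ [t₀, 0): y(t) + ∫_{t₀}^{t} (−τ)^{−1} z(τ) dτ ≤ exp( C₀ ((−t₀)^p − (−t)^p) / p ) · y(t₀). -/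
open Real Set MeasureTheory

/-!
With `A' = a`, the integrating factor `e^{-A}` turns `y' ≤ a y - v` into
`(e^{-A} y)' ≤ -e^{-A} v`, so `e^{-A(t)} y(t) + ∫_{t₀}^t e^{-A} v ≤ e^{-A(t₀)} y(t₀)`.
If `A` is nondecreasing and `v ≥ 0`, the weight `e^{-A(τ)}` under the integral is at least
`e^{-A(t)}`, which gives `y(t) + ∫_{t₀}^t v ≤ e^{A(t) - A(t₀)} y(t₀)`. For the singular weight
`a(t) = C₀ (-t)^{p-1}` one takes `A(t) = -C₀ (-t)^p / p`.
-/

theorem hasDerivAt_neg_rpow_neg_div {p s : ℝ} (hp : p ≠ 0) (hs : s < 0) :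
    HasDerivAt (fun x : ℝ => -((-x) ^ p / p)) ((-s) ^ (p - 1)) s := by
  have h : HasDerivAt (fun x : ℝ => -((-x) ^ p / p)) (-(p * (-s) ^ (p - 1) * -1 / p)) s :=
    (((hasDerivAt_rpow_const (Or.inl (neg_ne_zero.mpr hs.ne))).comp s
      (hasDerivAt_neg s)).div_const p).neg
  exact h.congr_deriv (by field_simp)

section IntegratingFactor

variable {y y' A a v : ℝ → ℝ} {t₀ t : ℝ}

theorem exp_neg_mul_add_integral_le (hle : t₀ ≤ t)
    (hyc : ContinuousOn y (Icc t₀ t)) (hy : ∀ s ∈ Ioo t₀ t, HasDerivAt y (y' s) s)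
    (hAc : ContinuousOn A (Icc t₀ t)) (hA : ∀ s ∈ Ioo t₀ t, HasDerivAt A (a s) s)
    (hv : IntegrableOn v (Icc t₀ t)) (hineq : ∀ s ∈ Ioo t₀ t, y' s ≤ a s * y s - v s) :
    exp (-A t) * y t + ∫ τ in t₀..t, exp (-A τ) * v τ ≤ exp (-A t₀) * y t₀ := by
  have hexpc : ContinuousOn (fun s => exp (-A s)) (Icc t₀ t) := hAc.neg.rexp
  have hw : IntegrableOn (fun s => exp (-A s) * v s) (Icc t₀ t) :=
    hv.continuousOn_mul hexpc isCompact_Icc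
  have hderiv : ∀ s ∈ Ioo t₀ t, HasDerivAt (fun s => exp (-A s) * y s)
      (exp (-A s) * (y' s - a s * y s)) s := fun s hs =>
    ((hA s hs).neg.exp.mul (hy s hs)).congr_deriv (by simp only [Pi.neg_apply]; ring)
  have key := intervalIntegral.sub_le_integral_of_hasDeriv_right_of_le
    (g := fun s => exp (-A s) * y s) (φ := fun s => -(exp (-A s) * v s)) hle (hexpc.mul hyc)
    (fun s hs => (hderiv s hs).hasDerivWithinAt) hw.neg fun s hs => by
      nlinarith [hineq s hs, exp_pos (-A s)]
  rw [intervalIntegral.integral_neg] at key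
  linarith

theorem add_integral_le_exp_sub_mul (hle : t₀ ≤ t)
    (hyc : ContinuousOn y (Icc t₀ t)) (hy : ∀ s ∈ Ioo t₀ t, HasDerivAt y (y' s) s)
    (hAc : ContinuousOn A (Icc t₀ t)) (hA : ∀ s ∈ Ioo t₀ t, HasDerivAt A (a s) s)
    (hAmono : MonotoneOn A (Icc t₀ t)) (hv : IntegrableOn v (Icc t₀ t))
    (hv0 : ∀ s ∈ Icc t₀ t, 0 ≤ v s) (hineq : ∀ s ∈ Ioo t₀ t, y' s ≤ a s * y s - v s) :
    y t + ∫ τ in t₀..t, v τ ≤ exp (A t - A t₀) * y t₀ := by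
  have hweight : exp (-A t) * ∫ τ in t₀..t, v τ ≤ ∫ τ in t₀..t, exp (-A τ) * v τ := by
    rw [← intervalIntegral.integral_const_mul]
    have hvi := (intervalIntegrable_iff_integrableOn_Icc_of_le hle).mpr hv
    have hwi := (intervalIntegrable_iff_integrableOn_Icc_of_le hle).mpr
      (hv.continuousOn_mul hAc.neg.rexp isCompact_Icc)
    refine intervalIntegral.integral_mono_on hle (hvi.const_mul _) hwi fun s hs => ?_
    have hAs : A s ≤ A t := hAmono hs ⟨hle, le_rfl⟩ hs.2
    exact mul_le_mul_of_nonneg_right (exp_le_exp.mpr (neg_le_neg hAs)) (hv0 s hs)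
  have hbound : exp (-A t) * (y t + ∫ τ in t₀..t, v τ) ≤ exp (-A t₀) * y t₀ := by
    linarith [exp_neg_mul_add_integral_le hle hyc hy hAc hA hv hineq]
  calc y t + ∫ τ in t₀..t, v τ
      = exp (A t) * (exp (-A t) * (y t + ∫ τ in t₀..t, v τ)) := by
        rw [← mul_assoc, ← exp_add, add_neg_cancel, exp_zero, one_mul]
    _ ≤ exp (A t) * (exp (-A t₀) * y t₀) := by gcongr
    _ = exp (A t - A t₀) * y t₀ := by rw [sub_eq_add_neg, exp_add, mul_assoc]

end IntegratingFactor

theorem singular_gronwall_energy_general (t₀ p C₀ : ℝ)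
    (hp0 : 0 < p) (hC : 0 ≤ C₀)
    (y z y' : ℝ → ℝ)
    (hy : ∀ t ∈ Ico t₀ (0 : ℝ), HasDerivAt y (y' t) t)
    (hz : ContinuousOn z (Ico t₀ (0 : ℝ)))
    (hz0 : ∀ t ∈ Ico t₀ (0 : ℝ), 0 ≤ z t)
    (hineq : ∀ t ∈ Ico t₀ (0 : ℝ),
      y' t ≤ C₀ * (-t) ^ (p - 1) * y t - (-t)⁻¹ * z t) :
    ∀ t ∈ Ico t₀ (0 : ℝ),
      y t + ∫ τ in t₀..t, (-τ)⁻¹ * z τ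
        ≤ Real.exp (C₀ * ((-t₀) ^ p - (-t) ^ p) / p) * y t₀ := by
  rintro t ⟨ht₀t, ht0⟩
  have hIcc : Icc t₀ t ⊆ Ico t₀ 0 := Icc_subset_Ico_right ht0
  have hIoo : Ioo t₀ t ⊆ Ico t₀ 0 := Ioo_subset_Icc_self.trans hIcc
  set A : ℝ → ℝ := fun s => C₀ * -((-s) ^ p / p)
  have hA : ∀ s < 0, HasDerivAt A (C₀ * (-s) ^ (p - 1)) s := fun s hs =>
    (hasDerivAt_neg_rpow_neg_div hp0.ne' hs).const_mul C₀
  have hAmono : MonotoneOn A (Icc t₀ t) := fun r _ s hs hrs => by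
    have : (-s) ^ p ≤ (-r) ^ p := rpow_le_rpow (by linarith [hs.2]) (by linarith) hp0.le
    simp only [A]
    gcongr
  have hv : ContinuousOn (fun s => (-s)⁻¹ * z s) (Icc t₀ t) :=
    ((continuousOn_neg.inv₀ fun s hs => by linarith [hs.2]).mul hz).mono hIcc
  have h := add_integral_le_exp_sub_mul ht₀t
    (fun s hs => (hy s (hIcc hs)).continuousAt.continuousWithinAt) (fun s hs => hy s (hIoo hs))
    (fun s hs => (hA s (hIcc hs).2).continuousAt.continuousWithinAt) (fun s hs => hA s (hIoo hs).2)
    hAmono hv.integrableOn_Icc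
    (fun s hs => mul_nonneg (inv_nonneg.mpr (by linarith [(hIcc hs).2])) (hz0 s (hIcc hs)))
    (fun s hs => hineq s (hIoo hs))
  convert h using 3
  ring

/-- Singular-weight Gronwall-type energy inequality: if
`y′(t) ≤ C₀ (−t)^{p−1} y(t) − (−t)⁻¹ z(t)` on `[t₀, 0)` with `z ≥ 0`
continuous, then
`y(t) + ∫_{t₀}^t (−τ)⁻¹ z(τ) dτ ≤ exp(C₀((−t₀)^p − (−t)^p)/p) y(t₀)`. -/
theorem singular_gronwall_energy (t₀ p C₀ : ℝ) (ht₀ : t₀ < 0)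
    (hp0 : 0 < p) (hp1 : p ≤ 1) (hC : 0 ≤ C₀)
    (y z y' : ℝ → ℝ)
    (hy : ∀ t ∈ Ico t₀ (0 : ℝ), HasDerivAt y (y' t) t)
    (hz : ContinuousOn z (Ico t₀ (0 : ℝ)))
    (hz0 : ∀ t ∈ Ico t₀ (0 : ℝ), 0 ≤ z t)
    (hineq : ∀ t ∈ Ico t₀ (0 : ℝ),
      y' t ≤ C₀ * (-t) ^ (p - 1) * y t - (-t)⁻¹ * z t) :
    ∀ t ∈ Ico t₀ (0 : ℝ),
      y t + ∫ τ in t₀..t, (-τ)⁻¹ * z τ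
        ≤ Real.exp (C₀ * ((-t₀) ^ p - (-t) ^ p) / p) * y t₀ :=
  singular_gronwall_energy_general t₀ p C₀ hp0 hC y z y' hy hz hz0 hineq
end

section
/- Let t₀ < 0, 0 < p ≤ 1, a ≥ 0 and ρ ≥ 0. Let y : [t₀, 0) → ℝ be differentiable and satisfy y′(t) ≤ ( a (−t)^{p−1} − ρ (−t)^{−1} ) y(t) for all t ∈ [t₀, 0). Then for all t ∈ [t₀, 0): y(t) ≤ exp( a ((−t₀)^p − (−t)^p) / p ) · ( (−t)/(−t₀) )^{ρ} · y(t₀). In particular, if ρ > 0 and y(t₀) ≥ 0, then y(t) → 0 with the power rate |t|^{ρ} as t → 0⁻. -/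
/-!
With the potential `K(s) = ρ log(-s) - a (-s)^p / p`, whose derivative is the coefficient
`a (-s)^(p-1) - ρ (-s)⁻¹`, the differential inequality says that `exp(-K) y` has nonpositive
derivative, so it is antitone on `[t₀, t]`; unwinding gives `y(t) ≤ exp(K t - K t₀) y(t₀)`, and
`exp(K t - K t₀)` is the claimed factor. For the decay rate, drop `-(-t)^p ≤ 0` from the exponent.
-/

open Real Set

theorem le_exp_sub_mul_of_hasDerivAt_le_mul {y y' K k : ℝ → ℝ} {a b : ℝ} (hab : a ≤ b)
    (hy : ∀ t ∈ Icc a b, HasDerivAt y (y' t) t) (hK : ∀ t ∈ Icc a b, HasDerivAt K (k t) t)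
    (hle : ∀ t ∈ Icc a b, y' t ≤ k t * y t) :
    y b ≤ exp (K b - K a) * y a := by
  have hderiv : ∀ t ∈ Icc a b, HasDerivAt (fun s => exp (-K s) * y s)
      (exp (-K t) * (-k t) * y t + exp (-K t) * y' t) t :=
    fun t ht => ((hK t ht).neg.exp).mul (hy t ht)
  have hanti : AntitoneOn (fun s => exp (-K s) * y s) (Icc a b) := by
    refine antitoneOn_of_hasDerivWithinAt_nonpos (convex_Icc a b)
      (fun t ht => (hderiv t ht).continuousAt.continuousWithinAt)
      (fun t ht => (hderiv t (interior_subset ht)).hasDerivWithinAt) fun t ht => ?_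
    calc exp (-K t) * (-k t) * y t + exp (-K t) * y' t = exp (-K t) * (y' t - k t * y t) := by
          ring
      _ ≤ 0 := mul_nonpos_of_nonneg_of_nonpos (exp_pos _).le
          (sub_nonpos.2 (hle t (interior_subset ht)))
  have hba := hanti (left_mem_Icc.2 hab) (right_mem_Icc.2 hab) hab
  calc y b = exp (K b) * (exp (-K b) * y b) := by
        rw [← mul_assoc, ← exp_add, add_neg_cancel, exp_zero, one_mul]
    _ ≤ exp (K b) * (exp (-K a) * y a) := mul_le_mul_of_nonneg_left hba (exp_pos _).le
    _ = exp (K b - K a) * y a := by rw [← mul_assoc, ← exp_add, sub_eq_add_neg]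

noncomputable def singularPotential (a p ρ s : ℝ) : ℝ := ρ * log (-s) - a * (-s) ^ p / p

theorem hasDerivAt_singularPotential {a p ρ s : ℝ} (hp : p ≠ 0) (hs : s < 0) :
    HasDerivAt (singularPotential a p ρ) (a * (-s) ^ (p - 1) - ρ * (-s)⁻¹) s := by
  have hs' : -s ≠ 0 := by linarith
  have hrpow : HasDerivAt (fun x : ℝ => (-x) ^ p) (p * (-s) ^ (p - 1) * (-1)) s :=
    (hasDerivAt_rpow_const (Or.inl hs')).comp s (hasDerivAt_neg s)
  have hlog : HasDerivAt (fun x : ℝ => log (-x)) ((-s)⁻¹ * (-1)) s :=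
    (hasDerivAt_log hs').comp s (hasDerivAt_neg s)
  refine ((hlog.const_mul ρ).sub ((hrpow.const_mul a).div_const p)).congr_deriv ?_
  field_simp
  ring

theorem exp_singularPotential_sub {a p ρ t₀ t : ℝ} (ht₀ : t₀ < 0) (ht : t < 0) :
    exp (singularPotential a p ρ t - singularPotential a p ρ t₀)
      = exp (a * ((-t₀) ^ p - (-t) ^ p) / p) * ((-t) / (-t₀)) ^ ρ := by
  have hpos : 0 < -t / -t₀ := div_pos (neg_pos.2 ht) (neg_pos.2 ht₀)
  rw [rpow_def_of_pos hpos, ← exp_add, log_div (by linarith) (by linarith)]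
  unfold singularPotential
  congr 1
  ring

theorem exp_singularPotential_sub_le {a p ρ t₀ t : ℝ} (ha : 0 ≤ a) (hp : 0 ≤ p) (ht₀ : t₀ < 0)
    (ht : t < 0) :
    exp (singularPotential a p ρ t - singularPotential a p ρ t₀)
      ≤ exp (a * (-t₀) ^ p / p) * (-t₀) ^ (-ρ) * (-t) ^ ρ := by
  have ht' : 0 < -t := neg_pos.2 ht
  have ht₀' : 0 < -t₀ := neg_pos.2 ht₀
  have hexp : exp (a * ((-t₀) ^ p - (-t) ^ p) / p) ≤ exp (a * (-t₀) ^ p / p) := by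
    gcongr
    nlinarith [rpow_nonneg ht'.le p]
  calc exp (singularPotential a p ρ t - singularPotential a p ρ t₀)
        = exp (a * ((-t₀) ^ p - (-t) ^ p) / p) * ((-t) / (-t₀)) ^ ρ :=
          exp_singularPotential_sub ht₀ ht
    _ ≤ exp (a * (-t₀) ^ p / p) * ((-t) / (-t₀)) ^ ρ := by gcongr
    _ = exp (a * (-t₀) ^ p / p) * (-t₀) ^ (-ρ) * (-t) ^ ρ := by
      rw [div_rpow ht'.le ht₀'.le, rpow_neg ht₀'.le]
      ring

theorem singular_gronwall_decay_general (t₀ p a ρ : ℝ) (ht₀ : t₀ < 0)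
    (hp0 : 0 < p) (ha : 0 ≤ a)
    (y y' : ℝ → ℝ)
    (hy : ∀ t ∈ Ico t₀ (0 : ℝ), HasDerivAt y (y' t) t)
    (hineq : ∀ t ∈ Ico t₀ (0 : ℝ),
      y' t ≤ (a * (-t) ^ (p - 1) - ρ * (-t)⁻¹) * y t) :
    (∀ t ∈ Ico t₀ (0 : ℝ),
      y t ≤ Real.exp (a * ((-t₀) ^ p - (-t) ^ p) / p)
              * ((-t) / (-t₀)) ^ ρ * y t₀) ∧
    (0 < ρ → 0 ≤ y t₀ →
      ∃ C : ℝ, 0 ≤ C ∧ ∀ t ∈ Ico t₀ (0 : ℝ), y t ≤ C * (-t) ^ ρ) := by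
  have hbound : ∀ t ∈ Ico t₀ (0 : ℝ),
      y t ≤ exp (singularPotential a p ρ t - singularPotential a p ρ t₀) * y t₀ := by
    intro t ht
    have hsub : Icc t₀ t ⊆ Ico t₀ 0 := Icc_subset_Ico_right ht.2
    exact le_exp_sub_mul_of_hasDerivAt_le_mul ht.1 (fun s hs => hy s (hsub hs))
      (fun s hs => hasDerivAt_singularPotential hp0.ne' (hsub hs).2) fun s hs => hineq s (hsub hs)
  refine ⟨fun t ht => exp_singularPotential_sub ht₀ ht.2 ▸ hbound t ht, fun _ hy₀ =>
    ⟨exp (a * (-t₀) ^ p / p) * (-t₀) ^ (-ρ) * y t₀, ?_, fun t ht => ?_⟩⟩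
  · have : 0 ≤ -t₀ := by linarith
    positivity
  calc y t ≤ exp (singularPotential a p ρ t - singularPotential a p ρ t₀) * y t₀ := hbound t ht
    _ ≤ exp (a * (-t₀) ^ p / p) * (-t₀) ^ (-ρ) * (-t) ^ ρ * y t₀ := by
      gcongr
      exact exp_singularPotential_sub_le ha hp0.le ht₀ ht.2
    _ = exp (a * (-t₀) ^ p / p) * (-t₀) ^ (-ρ) * y t₀ * (-t) ^ ρ := by ring

/-- Damped singular-weight Gronwall inequality: if
`y′(t) ≤ (a(−t)^{p−1} − ρ(−t)⁻¹) y(t)` on `[t₀, 0)`, then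
`y(t) ≤ exp(a((−t₀)^p − (−t)^p)/p) ((−t)/(−t₀))^ρ y(t₀)`; in particular,
for `ρ > 0` and `y(t₀) ≥ 0`, `y` tends to `0` with the power rate `|t|^ρ`
as `t → 0⁻`. -/
theorem singular_gronwall_decay (t₀ p a ρ : ℝ) (ht₀ : t₀ < 0)
    (hp0 : 0 < p) (hp1 : p ≤ 1) (ha : 0 ≤ a) (hρ : 0 ≤ ρ)
    (y y' : ℝ → ℝ)
    (hy : ∀ t ∈ Ico t₀ (0 : ℝ), HasDerivAt y (y' t) t)
    (hineq : ∀ t ∈ Ico t₀ (0 : ℝ),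
      y' t ≤ (a * (-t) ^ (p - 1) - ρ * (-t)⁻¹) * y t) :
    (∀ t ∈ Ico t₀ (0 : ℝ),
      y t ≤ Real.exp (a * ((-t₀) ^ p - (-t) ^ p) / p)
              * ((-t) / (-t₀)) ^ ρ * y t₀) ∧
    (0 < ρ → 0 ≤ y t₀ →
      ∃ C : ℝ, 0 ≤ C ∧ ∀ t ∈ Ico t₀ (0 : ℝ), y t ≤ C * (-t) ^ ρ) :=
  singular_gronwall_decay_general t₀ p a ρ ht₀ hp0 ha y y' hy hineq
end
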